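/- arXiv:1003.3971 — 4 statements merged into one kernel-verified Lean document; each statement's English description precedes it below -/
import Mathlib

section
/- Let k be a field of characteristic 0, n ≥ 1, and a₁,…,aₙ ∈ kˣ. Let A be the 2ⁿ × 2ⁿ Gram matrix of the n-fold Pfister form φₙ = ⟨⟨a₁,…,aₙ⟩⟩, i.e. the diagonal matrix whose rows and columns are indexed by vectors ε ∈ {0,1}ⁿ (the first index being ε = (0,…,0)) and whose (ε,ε)-entry is ∏_{i : εᵢ = 1} (−aᵢ). Let K = k(x_ε : ε ∈ {0,1}ⁿ) be the rational function field in 2ⁿ variables and set c = φₙ(x) = Σ_ε A_{εε} x_ε² ∈ K (which is nonzero). Then there exists a matrix C ∈ M_{2ⁿ}(K) such that: (1) C · A · Cᵀ = c · A; (2) C · C = c · I, so that C is invertible with C⁻¹ = C/c; (3) the first row of C is the vector (x_ε)_ε; (4) the first column of C is A · (x_ε)ᵀ. -/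
/-!
If `P` and `D` are self-adjoint for a symmetric Gram matrix `G`, with `P² = p` and `D² = e ≠ 0`,
then `[[P, D], [b D, -e⁻¹ D P D]]` is self-adjoint for `G ⊕ b G` and squares to `p + b e`.
Since `⟨⟨a₁,…,aₙ₊₁⟩⟩ = ⟨⟨a₂,…,aₙ₊₁⟩⟩ ⊥ (-a₁) ⟨⟨a₂,…,aₙ₊₁⟩⟩`, induction on `n`, splitting `x` along
the first coordinate of `ε`, yields `C` with first row `x`, `C² = φ(x)` and `C A` symmetric. Then
`C A Cᵀ = C (C A) = φ(x) A`, and symmetry of `C A` turns the first row into the first column.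
The partial values `e` met along the way are sums `Σ_{ε ∈ S} A_εε x_ε²` over nonempty `S`, nonzero
because `x` is generic.
-/

open MvPolynomial

open Matrix

/-- Self-adjointness of `C` for the bilinear form with Gram matrix `G` is encoded as symmetry of
`C * G`. -/
structure IsSelfAdjointSimilitude {ι K : Type*} [Fintype ι] [DecidableEq ι] [CommSemiring K]
    (G : Matrix ι ι K) (c : K) (C : Matrix ι ι K) : Prop where
  mul_self : C * C = c • 1
  isSymm_mul : (C * G).IsSymm

section SelfAdjoint

variable {ι K : Type*} [Fintype ι] [CommSemiring K] {G : Matrix ι ι K}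

theorem Matrix.IsSymm.mul_transpose_eq_of_isSymm_mul (hG : G.IsSymm) {X : Matrix ι ι K}
    (hX : (X * G).IsSymm) : G * Xᵀ = X * G := by
  rw [← hX.eq, transpose_mul, hG.eq]

theorem Matrix.IsSymm.isSymm_mul_mul_mul_of_isSymm_mul (hG : G.IsSymm) {X Y : Matrix ι ι K}
    (hX : (X * G).IsSymm) (hY : (Y * G).IsSymm) : (X * Y * X * G).IsSymm := by
  have hX' := hG.mul_transpose_eq_of_isSymm_mul hX
  have hY' := hG.mul_transpose_eq_of_isSymm_mul hY
  calc (X * Y * X * G)ᵀ = G * Xᵀ * Yᵀ * Xᵀ := by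
        simp only [transpose_mul, hG.eq, Matrix.mul_assoc]
    _ = X * Y * X * G := by
        rw [hX', Matrix.mul_assoc X, hY', ← Matrix.mul_assoc, Matrix.mul_assoc _ G, hX']
        simp only [Matrix.mul_assoc]

namespace IsSelfAdjointSimilitude

variable [DecidableEq ι] {c : K} {C : Matrix ι ι K}

theorem mul_mul_transpose (hC : IsSelfAdjointSimilitude G c C) (hG : G.IsSymm) :
    C * G * Cᵀ = c • G := by
  rw [Matrix.mul_assoc, hG.mul_transpose_eq_of_isSymm_mul hC.isSymm_mul, ← Matrix.mul_assoc,
    hC.mul_self, smul_mul, Matrix.one_mul]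

theorem reindex {κ : Type*} [Fintype κ] [DecidableEq κ] (hC : IsSelfAdjointSimilitude G c C)
    (σ : ι ≃ κ) : IsSelfAdjointSimilitude (reindex σ σ G) c (reindex σ σ C) where
  mul_self := by
    rw [reindex_apply, submatrix_mul_equiv, hC.mul_self, ← submatrix_one_equiv σ.symm]
    rfl
  isSymm_mul := by
    simpa only [reindex_apply, submatrix_mul_equiv] using hC.isSymm_mul.submatrix σ.symm

end IsSelfAdjointSimilitude

end SelfAdjoint

namespace IsSelfAdjointSimilitude

variable {ι K : Type*} [Fintype ι] [DecidableEq ι] [Field K] {G P D : Matrix ι ι K} {p e : K}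

/-- The lower right block is forced by the anticommutation `P * D + D * S = 0`,
i.e. `S = -D⁻¹ * P * D`. -/
theorem doubling (hG : G.IsSymm) (hP : IsSelfAdjointSimilitude G p P)
    (hD : IsSelfAdjointSimilitude G e D) (he : e ≠ 0) (b : K) :
    IsSelfAdjointSimilitude (fromBlocks G 0 0 (b • G)) (p + b * e)
      (fromBlocks P D (b • D) (-e⁻¹ • (D * P * D))) where
  mul_self := by
    set S := -e⁻¹ • (D * P * D)
    have hDS : D * S = -(P * D) := by
      rw [Matrix.mul_smul, ← Matrix.mul_assoc, ← Matrix.mul_assoc, hD.mul_self, smul_mul,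
        smul_mul, Matrix.one_mul, smul_smul, neg_mul, inv_mul_cancel₀ he, neg_one_smul]
    have hSD : S * D = -(D * P) := by
      rw [smul_mul, Matrix.mul_assoc, hD.mul_self, Matrix.mul_smul, Matrix.mul_one, smul_smul,
        neg_mul, inv_mul_cancel₀ he, neg_one_smul]
    have hSS : S * S = p • 1 := by
      rw [smul_mul, Matrix.mul_assoc, hDS, Matrix.mul_neg, Matrix.mul_assoc D P,
        ← Matrix.mul_assoc P P, hP.mul_self, smul_mul, Matrix.one_mul, Matrix.mul_smul,
        hD.mul_self, smul_smul, smul_neg, smul_smul]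
      rw [show -e⁻¹ * (p * e) = -p by field_simp, neg_smul, neg_neg]
    simp only [fromBlocks_multiply, Matrix.mul_smul, smul_mul, hP.mul_self, hD.mul_self, hDS,
      hSD, hSS, add_neg_cancel, smul_neg]
    rw [← fromBlocks_one, fromBlocks_smul, smul_zero]
    congr 1 <;> module
  isSymm_mul := by
    rw [fromBlocks_multiply]
    simp only [Matrix.mul_zero, add_zero, zero_add, Matrix.mul_smul, smul_mul]
    refine IsSymm.fromBlocks hP.isSymm_mul ?_ ?_
    · rw [transpose_smul, hD.isSymm_mul.eq]
    · exact ((hG.isSymm_mul_mul_mul_of_isSymm_mul hD.isSymm_mul hP.isSymm_mul).smul _).smul _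

end IsSelfAdjointSimilitude

section Pfister

variable {K : Type*} {n : ℕ}

/-- The diagonal of the Gram matrix of `⟨⟨a₁,…,aₙ⟩⟩` when `b i = -aᵢ`. -/
def pfisterDiag [CommMonoid K] (b : Fin n → K) (ε : Fin n → Bool) : K :=
  ∏ i, if ε i then b i else 1

@[simp]
theorem pfisterDiag_false [CommMonoid K] (b : Fin n → K) :
    pfisterDiag b (fun _ => false) = 1 := by
  simp [pfisterDiag]

@[simp]
theorem pfisterDiag_cons_false [CommMonoid K] (b : Fin (n + 1) → K) (ε : Fin n → Bool) :
    pfisterDiag b (Fin.cons false ε) = pfisterDiag (Fin.tail b) ε := by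
  simp [pfisterDiag, Fin.prod_univ_succ, Fin.tail]

@[simp]
theorem pfisterDiag_cons_true [CommMonoid K] (b : Fin (n + 1) → K) (ε : Fin n → Bool) :
    pfisterDiag b (Fin.cons true ε) = b 0 * pfisterDiag (Fin.tail b) ε := by
  simp [pfisterDiag, Fin.prod_univ_succ, Fin.tail]

def Fin.consBoolEquiv (n : ℕ) : (Fin n → Bool) ⊕ (Fin n → Bool) ≃ (Fin (n + 1) → Bool) :=
  (Equiv.boolProdEquivSum _).symm.trans (Fin.consEquiv fun _ => Bool)

@[simp]
theorem Fin.consBoolEquiv_inl (ε : Fin n → Bool) :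
    Fin.consBoolEquiv n (.inl ε) = Fin.cons false ε :=
  rfl

@[simp]
theorem Fin.consBoolEquiv_inr (ε : Fin n → Bool) :
    Fin.consBoolEquiv n (.inr ε) = Fin.cons true ε :=
  rfl

theorem reindex_consBoolEquiv_fromBlocks_diagonal [CommSemiring K] (b : Fin (n + 1) → K) :
    reindex (Fin.consBoolEquiv n) (Fin.consBoolEquiv n)
      (fromBlocks (diagonal (pfisterDiag (Fin.tail b))) 0 0
        (b 0 • diagonal (pfisterDiag (Fin.tail b)))) = diagonal (pfisterDiag b) := by
  rw [← diagonal_smul, fromBlocks_diagonal, reindex_apply, submatrix_diagonal_equiv]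
  congr 1
  funext ε
  obtain ⟨s | s, rfl⟩ := (Fin.consBoolEquiv n).surjective ε <;>
    simp only [Function.comp_apply, Equiv.symm_apply_apply] <;> simp

theorem sum_pfisterDiag_mul_sq_cons [CommSemiring K] (b : Fin (n + 1) → K)
    (x : (Fin (n + 1) → Bool) → K) :
    ∑ ε, pfisterDiag b ε * x ε ^ 2 =
      ∑ ε, pfisterDiag (Fin.tail b) ε * x (Fin.cons false ε) ^ 2 +
        b 0 * ∑ ε, pfisterDiag (Fin.tail b) ε * x (Fin.cons true ε) ^ 2 := by
  rw [← (Fin.consBoolEquiv n).sum_comp, Fintype.sum_sum_type, Finset.mul_sum]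
  simp [mul_assoc]

theorem exists_isSelfAdjointSimilitude_pfisterDiag [Field K] (b : Fin n → K)
    (x : (Fin n → Bool) → K)
    (hx : ∀ S : Finset (Fin n → Bool), S.Nonempty → ∑ ε ∈ S, pfisterDiag b ε * x ε ^ 2 ≠ 0) :
    ∃ C, IsSelfAdjointSimilitude (diagonal (pfisterDiag b)) (∑ ε, pfisterDiag b ε * x ε ^ 2) C ∧
      ∀ ε, C (fun _ => false) ε = x ε := by
  induction n with
  | zero =>
    let ε₀ : Fin 0 → Bool := fun _ => false
    refine ⟨x ε₀ • 1, ⟨?_, ?_⟩, fun ε => ?_⟩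
    · rw [Fintype.sum_subsingleton _ ε₀, pfisterDiag_false, one_mul, smul_mul_smul,
        Matrix.one_mul, sq]
    · rw [IsSymm, smul_mul, Matrix.one_mul, transpose_smul, diagonal_transpose]
    · rw [Subsingleton.elim ε ε₀, Matrix.smul_apply, one_apply_eq, smul_eq_mul, mul_one]
  | succ n ih =>
    set σ := Fin.consBoolEquiv n
    obtain ⟨P, hP, hP₀⟩ := ih (Fin.tail b) (fun ε => x (Fin.cons false ε)) fun S hS => by
      simpa [Finset.sum_map] using
        hx (S.map ⟨_, Fin.cons_right_injective false⟩) (hS.map)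
    have hxD : ∀ S : Finset (Fin n → Bool), S.Nonempty →
        ∑ ε ∈ S, pfisterDiag (Fin.tail b) ε * x (Fin.cons true ε) ^ 2 ≠ 0 := fun S hS => by
      have := hx (S.map ⟨_, Fin.cons_right_injective true⟩) (hS.map)
      simp only [Finset.sum_map, Function.Embedding.coeFn_mk, pfisterDiag_cons_true, mul_assoc,
        ← Finset.mul_sum] at this
      exact right_ne_zero_of_mul this
    obtain ⟨D, hD, hD₀⟩ := ih (Fin.tail b) (fun ε => x (Fin.cons true ε)) hxD
    set e := ∑ ε, pfisterDiag (Fin.tail b) ε * x (Fin.cons true ε) ^ 2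
    refine ⟨reindex σ σ (fromBlocks P D (b 0 • D) (-e⁻¹ • (D * P * D))), ?_, fun ε => ?_⟩
    · rw [← reindex_consBoolEquiv_fromBlocks_diagonal, sum_pfisterDiag_mul_sq_cons]
      exact (hP.doubling (isSymm_diagonal _) hD (hxD _ Finset.univ_nonempty) _).reindex σ
    · have h₀ : σ.symm (fun _ => false) = .inl (fun _ => false) :=
        σ.symm_apply_eq.mpr (Fin.cons_self_tail _).symm
      obtain ⟨s | s, rfl⟩ := σ.surjective ε
      · rw [reindex_apply, submatrix_apply, h₀, σ.symm_apply_apply, fromBlocks_apply₁₁, hP₀]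
        rfl
      · rw [reindex_apply, submatrix_apply, h₀, σ.symm_apply_apply, fromBlocks_apply₁₂, hD₀]
        rfl

end Pfister

theorem MvPolynomial.sum_C_mul_X_sq_ne_zero {σ R : Type*} [CommSemiring R] {S : Finset σ}
    {d : σ → R} {i : σ} (hi : i ∈ S) (hd : d i ≠ 0) : ∑ j ∈ S, C (d j) * X j ^ 2 ≠ 0 := by
  classical
  intro h
  have := congrArg (coeff (Finsupp.single i 2)) h
  simp [coeff_sum, coeff_C_mul, coeff_X_pow, Finsupp.single_left_inj, hi] at this
  exact hd this

theorem pfister_similitude_matrix_general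
    (k : Type*) [Field k] (n : ℕ)
    (a : Fin n → k) (ha : ∀ i, a i ≠ 0)
    -- the diagonal entries of the Gram matrix of ⟪a₁,…,aₙ⟫
    (d : (Fin n → Bool) → k) (hd : ∀ ε, d ε = ∏ i : Fin n, if ε i then -a i else 1)
    -- the generic vector x over the rational function field
    -- K = FractionRing (MvPolynomial (Fin n → Bool) k)
    (x : (Fin n → Bool) → FractionRing (MvPolynomial (Fin n → Bool) k))
    (hx : ∀ ε, x ε = algebraMap (MvPolynomial (Fin n → Bool) k)
        (FractionRing (MvPolynomial (Fin n → Bool) k)) (MvPolynomial.X ε))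
    -- the Gram matrix over K and the generic value c = φₙ(x)
    (A : Matrix (Fin n → Bool) (Fin n → Bool) (FractionRing (MvPolynomial (Fin n → Bool) k)))
    (hA : A = Matrix.diagonal (fun ε =>
        algebraMap k (FractionRing (MvPolynomial (Fin n → Bool) k)) (d ε)))
    (c : FractionRing (MvPolynomial (Fin n → Bool) k))
    (hc : c = ∑ ε : Fin n → Bool,
        algebraMap k (FractionRing (MvPolynomial (Fin n → Bool) k)) (d ε) * x ε ^ 2) :
    c ≠ 0 ∧
    ∃ C : Matrix (Fin n → Bool) (Fin n → Bool) (FractionRing (MvPolynomial (Fin n → Bool) k)),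
      C * A * C.transpose = c • A ∧
      C * C = c • (1 : Matrix (Fin n → Bool) (Fin n → Bool)
        (FractionRing (MvPolynomial (Fin n → Bool) k))) ∧
      (∀ ε, C (fun _ => false) ε = x ε) ∧
      (∀ ε, C ε (fun _ => false) = (A.mulVec x) ε) := by
  set b : Fin n → FractionRing (MvPolynomial (Fin n → Bool) k) := fun i => algebraMap k _ (-a i)
  have hdb : ∀ ε, algebraMap k _ (d ε) = pfisterDiag b ε := by
    simp [hd, pfisterDiag, map_prod, apply_ite, b]
  have hd₀ : ∀ ε, d ε ≠ 0 := fun ε => by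
    rw [hd]
    exact Finset.prod_ne_zero_iff.mpr fun i _ => by split_ifs <;> simp [ha]
  have hsub : ∀ S : Finset (Fin n → Bool), S.Nonempty →
      ∑ ε ∈ S, pfisterDiag b ε * x ε ^ 2 ≠ 0 := by
    rintro S ⟨i, hi⟩
    have hmap : ∑ ε ∈ S, pfisterDiag b ε * x ε ^ 2 =
        algebraMap _ _ (∑ ε ∈ S, MvPolynomial.C (d ε) * X ε ^ 2) := by
      simp [← hdb, hx, IsScalarTower.algebraMap_apply k (MvPolynomial (Fin n → Bool) k)]
    rw [hmap, (IsFractionRing.injective _ _).ne_iff' (map_zero _)]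
    exact sum_C_mul_X_sq_ne_zero hi (hd₀ i)
  obtain ⟨C, hC, hC₀⟩ := exists_isSelfAdjointSimilitude_pfisterDiag b x hsub
  simp only [hdb] at hA hc
  subst hA hc
  refine ⟨hsub _ Finset.univ_nonempty, C, hC.mul_mul_transpose (isSymm_diagonal _), hC.mul_self,
    hC₀, fun ε => ?_⟩
  simpa [mul_diagonal, mulVec_diagonal, hC₀, mul_comm] using
    hC.isSymm_mul.apply (fun _ => false) ε

/-- Let `k` be a field of characteristic 0, `n ≥ 1`, and
`a₁,…,aₙ ∈ kˣ`.  Let `A` be the `2ⁿ × 2ⁿ` Gram matrix of the `n`-fold Pfister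
form `φₙ = ⟪a₁,…,aₙ⟫` (rows and columns indexed by `ε ∈ {0,1}ⁿ`, the first
index being `ε = (0,…,0)`, with `(ε,ε)`-entry `∏_{i : εᵢ = 1} (−aᵢ)`).
Let `K = k(x_ε)` be the rational function field in `2ⁿ` variables and
`c = φₙ(x) = Σ_ε A_{εε} x_ε²` (which is nonzero).  Then there is a matrix
`C ∈ M_{2ⁿ}(K)` with `C A Cᵀ = c A`, `C C = c I` (so `C` is invertible with
`C⁻¹ = C/c`), whose first row is `(x_ε)` and whose first column is `A (x_ε)ᵀ`. -/
theorem pfister_similitude_matrix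
    (k : Type*) [Field k] [CharZero k] (n : ℕ) (hn : 1 ≤ n)
    (a : Fin n → k) (ha : ∀ i, a i ≠ 0)
    -- the diagonal entries of the Gram matrix of ⟪a₁,…,aₙ⟫
    (d : (Fin n → Bool) → k) (hd : ∀ ε, d ε = ∏ i : Fin n, if ε i then -a i else 1)
    -- the generic vector x over the rational function field
    -- K = FractionRing (MvPolynomial (Fin n → Bool) k)
    (x : (Fin n → Bool) → FractionRing (MvPolynomial (Fin n → Bool) k))
    (hx : ∀ ε, x ε = algebraMap (MvPolynomial (Fin n → Bool) k)
        (FractionRing (MvPolynomial (Fin n → Bool) k)) (MvPolynomial.X ε))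
    -- the Gram matrix over K and the generic value c = φₙ(x)
    (A : Matrix (Fin n → Bool) (Fin n → Bool) (FractionRing (MvPolynomial (Fin n → Bool) k)))
    (hA : A = Matrix.diagonal (fun ε =>
        algebraMap k (FractionRing (MvPolynomial (Fin n → Bool) k)) (d ε)))
    (c : FractionRing (MvPolynomial (Fin n → Bool) k))
    (hc : c = ∑ ε : Fin n → Bool,
        algebraMap k (FractionRing (MvPolynomial (Fin n → Bool) k)) (d ε) * x ε ^ 2) :
    c ≠ 0 ∧
    ∃ C : Matrix (Fin n → Bool) (Fin n → Bool) (FractionRing (MvPolynomial (Fin n → Bool) k)),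
      C * A * C.transpose = c • A ∧
      C * C = c • (1 : Matrix (Fin n → Bool) (Fin n → Bool)
        (FractionRing (MvPolynomial (Fin n → Bool) k))) ∧
      (∀ ε, C (fun _ => false) ε = x ε) ∧
      (∀ ε, C ε (fun _ => false) = (A.mulVec x) ε) :=
  pfister_similitude_matrix_general k n a ha d hd x hx A hA c hc
end

section
/- Let K be a field, m ≥ 2, c ∈ K, and C ∈ M_m(K) a matrix with C · C = c · I. Let M ∈ M_{m−1}(K) be the matrix obtained from C by deleting its first row and first column, let r = (C_{1,2},…,C_{1,m}) be the first row of C with its first entry removed, and let s = (C_{2,1},…,C_{m,1}) be the first column of C with its first entry removed. Then M · M = c · I − s·rᵀ, where s·rᵀ denotes the (m−1) × (m−1) matrix with (i,j)-entry sᵢ rⱼ, and consequently (det M)² = c^{m−2} · (C_{1,1})². -/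
/-! Deleting the first row and column of `C` splits every entry of `C * C` off the rest as a
rank-one term, which gives `M * M = c • 1 - vecMulVec s r`. By the matrix determinant lemma
(here read off from the characteristic polynomial of `vecMulVec s r`) the determinant of the
right-hand side is `c ^ (n - 1) * (c - s ⬝ᵥ r)`, and the `(0, 0)` entry of `C * C = c • 1`
says `s ⬝ᵥ r = c - C 0 0 ^ 2`. -/

namespace Matrix

variable {R : Type*}

section Succ

variable [NonUnitalNonAssocSemiring R] {n : ℕ} (A B : Matrix (Fin (n + 1)) (Fin (n + 1)) R)

theorem mul_apply_zero_zero_eq_add_dotProduct :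
    (A * B) 0 0 = A 0 0 * B 0 0 + (fun j : Fin n => A 0 j.succ) ⬝ᵥ (fun i => B i.succ 0) := by
  simp only [mul_apply, Fin.sum_univ_succ, dotProduct]

theorem submatrix_succ_succ_mul :
    (A * B).submatrix Fin.succ Fin.succ =
      vecMulVec (fun i : Fin n => A i.succ 0) (fun j : Fin n => B 0 j.succ) +
        A.submatrix Fin.succ Fin.succ * B.submatrix Fin.succ Fin.succ := by
  ext i j
  simp only [submatrix_apply, mul_apply, Fin.sum_univ_succ, add_apply, vecMulVec_apply]

end Succ

theorem det_smul_one_sub_vecMulVec [CommRing R] {ι : Type*} [Fintype ι] [DecidableEq ι]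
    [Nonempty ι] (c : R) (u v : ι → R) :
    (c • (1 : Matrix ι ι R) - vecMulVec u v).det = c ^ (Fintype.card ι - 1) * (c - u ⬝ᵥ v) := by
  have hcard : Fintype.card ι = Fintype.card ι - 1 + 1 :=
    (Nat.sub_add_cancel Fintype.card_pos).symm
  rw [smul_one_eq_diagonal, ← scalar_apply, ← eval_charpoly, charpoly_vecMulVec]
  simp only [Polynomial.eval_sub, Polynomial.eval_smul, Polynomial.eval_pow, Polynomial.eval_X,
    smul_eq_mul]
  rw [hcard, pow_succ, Nat.add_sub_cancel]
  ring

end Matrix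

open Matrix in
/-- Let `K` be a field, `m ≥ 2` (here `m = n + 1` with `n ≥ 1`),
`c ∈ K`, and `C ∈ M_m(K)` with `C·C = c·I`.  Let `M` be the matrix obtained from
`C` by deleting its first row and first column, `r` the first row of `C` without
its first entry, and `s` the first column of `C` without its first entry.  Then
`M·M = c·I − s·rᵀ` and consequently `(det M)² = c^{m−2} · (C_{1,1})²`. -/
theorem deleted_matrix_square
    (K : Type*) [Field K] (n : ℕ) (hn : 1 ≤ n) (c : K)
    (C : Matrix (Fin (n + 1)) (Fin (n + 1)) K)
    (hC : C * C = c • (1 : Matrix (Fin (n + 1)) (Fin (n + 1)) K))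
    (M : Matrix (Fin n) (Fin n) K) (hM : ∀ i j, M i j = C i.succ j.succ)
    (r : Fin n → K) (hr : ∀ j, r j = C 0 j.succ)
    (s : Fin n → K) (hs : ∀ i, s i = C i.succ 0) :
    M * M = c • (1 : Matrix (Fin n) (Fin n) K) - Matrix.of (fun i j => s i * r j) ∧
    M.det ^ 2 = c ^ (n - 1) * (C 0 0) ^ 2 := by
  have hM' : M = C.submatrix Fin.succ Fin.succ := Matrix.ext hM
  have hr' : r = fun j => C 0 j.succ := funext hr
  have hs' : s = fun i => C i.succ 0 := funext hs
  have hsq : M * M = c • (1 : Matrix (Fin n) (Fin n) K) - vecMulVec s r := by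
    rw [hM', hr', hs', eq_sub_iff_add_eq', ← submatrix_succ_succ_mul, hC]
    exact congrArg (c • ·) (submatrix_one (α := K) _ (Fin.succ_injective n))
  have hdot : s ⬝ᵥ r = c - C 0 0 ^ 2 := by
    have h00 := mul_apply_zero_zero_eq_add_dotProduct C C
    rw [hC, Matrix.smul_apply, one_apply_eq, smul_eq_mul, mul_one] at h00
    rw [hs', hr', dotProduct_comm, h00]
    ring
  have : Nonempty (Fin n) := ⟨⟨0, hn⟩⟩
  refine ⟨hsq, ?_⟩
  rw [sq, ← det_mul, hsq, det_smul_one_sub_vecMulVec, Fintype.card_fin, hdot, sub_sub_cancel]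
end

section
/- Let k be a field of characteristic 0, m ≥ 2, c₂,…,c_m ∈ kˣ and a ∈ kˣ. Let φ be the diagonal quadratic form ⟨1, c₂,…,c_m⟩ on k^m with Gram matrix A = diag(1, c₂,…,c_m), let φ' = ⟨c₂,…,c_m⟩ be its pure part, and let ψ = φ ⊥ ⟨−a⟩ be the quadratic form on k^{m+1} given by ψ(w, t) = φ(w) − a·t², with polar bilinear form b_ψ(u, v) = ½(ψ(u+v) − ψ(u) − ψ(v)). Let K = k(x₂,…,x_m, y₂,…,y_m) be the rational function field, and set u = (1, x₂,…,x_m, 0) and v = (0, y₂,…,y_m, 1) in K^{m+1}. Suppose C ∈ M_m(K) satisfies C·A·Cᵀ = φ(1, x₂,…,x_m)·A, has first row (1, x₂,…,x_m) and first column A·(1, x₂,…,x_m)ᵀ, and define (z₁,…,z_m) = (0, y₂,…,y_m)·C. Then ψ(u)·ψ(v) − b_ψ(u,v)² = −a·φ(1, x₂,…,x_m) + φ'(z₂,…,z_m). -/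
/-!
Since `C` is a similitude of `φ` with multiplier `φ(x)`, the vector `z = yC` has
`φ(z) = φ(x) φ(y)`, and its first coordinate is `b_ψ(u, v)`. So the left side
`φ(x) (φ(y) - a) - z₁²` equals `-a φ(x) + φ(z) - z₁² = -a φ(x) + φ'(z)`.
-/

open Matrix

section DiagonalForm

variable {R n : Type*} [CommRing R] [Fintype n]

theorem sum_mul_sq_eq_vecMul_diagonal_dotProduct [DecidableEq n] (D w : n → R) :
    ∑ i, D i * w i ^ 2 = (w ᵥ* diagonal D) ⬝ᵥ w := by
  simp only [vecMul_diagonal, dotProduct, sq]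
  exact Finset.sum_congr rfl fun i _ => by ring

theorem sum_mul_add_sq (D x y : n → R) :
    ∑ i, D i * (x i + y i) ^ 2 =
      ∑ i, D i * x i ^ 2 + ∑ i, D i * y i ^ 2 + 2 * ∑ i, D i * x i * y i := by
  simp only [Finset.mul_sum, ← Finset.sum_add_distrib]
  exact Finset.sum_congr rfl fun i _ => by ring

theorem sum_mul_vecMul_sq_of_mul_diagonal_mul_transpose [DecidableEq n] {D : n → R}
    {C : Matrix n n R} {c : R} (hC : C * diagonal D * Cᵀ = c • diagonal D) (y : n → R) :
    ∑ j, D j * (y ᵥ* C) j ^ 2 = c * ∑ i, D i * y i ^ 2 := by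
  rw [sum_mul_sq_eq_vecMul_diagonal_dotProduct, sum_mul_sq_eq_vecMul_diagonal_dotProduct]
  calc (y ᵥ* C ᵥ* diagonal D) ⬝ᵥ (y ᵥ* C)
      = (y ᵥ* C ᵥ* diagonal D) ⬝ᵥ (Cᵀ *ᵥ y) := by rw [mulVec_transpose]
    _ = (y ᵥ* (C * diagonal D * Cᵀ)) ⬝ᵥ y := by
        rw [dotProduct_mulVec, vecMul_vecMul, vecMul_vecMul, Matrix.mul_assoc]
    _ = c * ((y ᵥ* diagonal D) ⬝ᵥ y) := by rw [hC, vecMul_smul, smul_dotProduct, smul_eq_mul]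

end DiagonalForm

theorem residue_discriminant_identity_general
    (k : Type*) [Field k] [CharZero k] (m₀ : ℕ)
    (d : Fin (m₀ + 2) → k) (hd0 : d 0 = 1)
    (a : k)
    -- the rational function field K = k(x₂,…,x_m, y₂,…,y_m)
    (K : Type*) [Field K] [Algebra k K]
    (x y : Fin (m₀ + 2) → K)
    -- the forms φ, ψ and the polar bilinear form of ψ
    (φ : (Fin (m₀ + 2) → K) → K)
    (hφ : ∀ w, φ w = ∑ i : Fin (m₀ + 2), algebraMap k K (d i) * w i ^ 2)
    (ψ : (Fin (m₀ + 2) → K) → K → K)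
    (hψ : ∀ w t, ψ w t = φ w - algebraMap k K a * t ^ 2)
    (bψ : K) (hbψ : bψ = (ψ (x + y) 1 - ψ x 0 - ψ y 1) / 2)
    -- the matrix C and the vector z = (0, y₂,…,y_m)·C
    (A : Matrix (Fin (m₀ + 2)) (Fin (m₀ + 2)) K)
    (hA : A = Matrix.diagonal (fun i => algebraMap k K (d i)))
    (C : Matrix (Fin (m₀ + 2)) (Fin (m₀ + 2)) K)
    (hCACt : C * A * C.transpose = φ x • A)
    (hcol : ∀ i, C i 0 = (A.mulVec x) i)
    (z : Fin (m₀ + 2) → K) (hz : ∀ j, z j = ∑ i : Fin (m₀ + 2), y i * C i j) :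
    ψ x 0 * ψ y 1 - bψ ^ 2 =
      -(algebraMap k K a) * φ x +
        ∑ i ∈ Finset.univ.filter (fun i : Fin (m₀ + 2) => i ≠ 0),
          algebraMap k K (d i) * z i ^ 2 := by
  have : CharZero K := charZero_of_injective_algebraMap (algebraMap k K).injective
  set D : Fin (m₀ + 2) → K := fun i => algebraMap k K (d i)
  have hφz : ∑ i, D i * z i ^ 2 = φ x * φ y := by
    rw [hφ y, show z = y ᵥ* C from funext hz]
    exact sum_mul_vecMul_sq_of_mul_diagonal_mul_transpose (hA ▸ hCACt) y
  -- the first column of `C` is `A x`, so `z₁` is the polar form of `φ` at `(x, y)`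
  have hz0 : z 0 = ∑ i, D i * x i * y i := by
    rw [hz]
    refine Finset.sum_congr rfl fun i _ => ?_
    rw [hcol, hA, mulVec_diagonal]
    ring
  have hb : bψ = z 0 := by
    simp only [hbψ, hψ, hφ, Pi.add_apply, sum_mul_add_sq, hz0]
    field_simp
    ring
  have hsplit : ∑ i ∈ Finset.univ.filter (fun i : Fin (m₀ + 2) => i ≠ 0), D i * z i ^ 2 =
      ∑ i, D i * z i ^ 2 - z 0 ^ 2 := by
    rw [Finset.filter_ne', ← Finset.add_sum_erase _ _ (Finset.mem_univ 0)]
    simp [D, hd0]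
  rw [hψ, hψ, hb, hsplit, hφz]
  ring

/-- Let `k` be a field of characteristic 0, `m ≥ 2`
(written `m = m₀ + 2`), `c₂,…,c_m ∈ kˣ`, `a ∈ kˣ`.  Let `φ = ⟨1, c₂,…,c_m⟩`
with Gram matrix `A = diag(1, c₂,…,c_m)`, `φ' = ⟨c₂,…,c_m⟩` its pure part, and
`ψ = φ ⊥ ⟨−a⟩` with polar form `b_ψ`.  Over `K = k(x₂,…,x_m, y₂,…,y_m)` set
`u = (1, x₂,…,x_m, 0)`, `v = (0, y₂,…,y_m, 1)`.  If `C ∈ M_m(K)` satisfies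
`C·A·Cᵀ = φ(1,x₂,…,x_m)·A`, has first row `(1, x₂,…,x_m)` and first column
`A·(1, x₂,…,x_m)ᵀ`, and `(z₁,…,z_m) = (0, y₂,…,y_m)·C`, then
`ψ(u)·ψ(v) − b_ψ(u,v)² = −a·φ(1, x₂,…,x_m) + φ'(z₂,…,z_m)`. -/
theorem residue_discriminant_identity
    (k : Type*) [Field k] [CharZero k] (m₀ : ℕ)
    (d : Fin (m₀ + 2) → k) (hd0 : d 0 = 1) (hd : ∀ i, d i ≠ 0)
    (a : k) (ha : a ≠ 0)
    -- the rational function field K = k(x₂,…,x_m, y₂,…,y_m)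
    (K : Type*) [Field K] [Algebra k K]
    (x y : Fin (m₀ + 2) → K) (hx0 : x 0 = 1) (hy0 : y 0 = 0)
    (e : K ≃ₐ[k] FractionRing (MvPolynomial
        ({i : Fin (m₀ + 2) // i ≠ 0} ⊕ {i : Fin (m₀ + 2) // i ≠ 0}) k))
    (hx : ∀ i (h : i ≠ 0), e (x i) = algebraMap
        (MvPolynomial ({i : Fin (m₀ + 2) // i ≠ 0} ⊕ {i : Fin (m₀ + 2) // i ≠ 0}) k) _
        (MvPolynomial.X (Sum.inl ⟨i, h⟩)))
    (hy : ∀ i (h : i ≠ 0), e (y i) = algebraMap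
        (MvPolynomial ({i : Fin (m₀ + 2) // i ≠ 0} ⊕ {i : Fin (m₀ + 2) // i ≠ 0}) k) _
        (MvPolynomial.X (Sum.inr ⟨i, h⟩)))
    -- the forms φ, ψ and the polar bilinear form of ψ
    (φ : (Fin (m₀ + 2) → K) → K)
    (hφ : ∀ w, φ w = ∑ i : Fin (m₀ + 2), algebraMap k K (d i) * w i ^ 2)
    (ψ : (Fin (m₀ + 2) → K) → K → K)
    (hψ : ∀ w t, ψ w t = φ w - algebraMap k K a * t ^ 2)
    (bψ : K) (hbψ : bψ = (ψ (x + y) 1 - ψ x 0 - ψ y 1) / 2)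
    -- the matrix C and the vector z = (0, y₂,…,y_m)·C
    (A : Matrix (Fin (m₀ + 2)) (Fin (m₀ + 2)) K)
    (hA : A = Matrix.diagonal (fun i => algebraMap k K (d i)))
    (C : Matrix (Fin (m₀ + 2)) (Fin (m₀ + 2)) K)
    (hCACt : C * A * C.transpose = φ x • A)
    (hrow : ∀ j, C 0 j = x j)
    (hcol : ∀ i, C i 0 = (A.mulVec x) i)
    (z : Fin (m₀ + 2) → K) (hz : ∀ j, z j = ∑ i : Fin (m₀ + 2), y i * C i j) :
    ψ x 0 * ψ y 1 - bψ ^ 2 =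
      -(algebraMap k K a) * φ x +
        ∑ i ∈ Finset.univ.filter (fun i : Fin (m₀ + 2) => i ≠ 0),
          algebraMap k K (d i) * z i ^ 2 :=
  residue_discriminant_identity_general k m₀ d hd0 a K x y φ hφ ψ hψ bψ hbψ A hA C hCACt hcol z hz
end

section
/- Let k be a field of characteristic 0, n ≥ 1, a₁,…,aₙ ∈ kˣ, and let φ = ⟨⟨a₁,…,aₙ⟩⟩ be the n-fold Pfister form on k^(2ⁿ); assume φ is anisotropic. Let b ∈ kˣ, fix an index i with 1 ≤ i ≤ n, and let u, v ∈ k be such that N = u² − aᵢ·v² is nonzero (N is a norm from the quadratic extension k(√aᵢ)/k). Then the quadratic forms φ ⊥ ⟨−b⟩ and φ ⊥ ⟨−b·N⟩, given on k^(2ⁿ) × k by (x, z) ↦ φ(x) − b·z² and (x, z) ↦ φ(x) − b·N·z² respectively, are birationally equivalent. -/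
open MvPolynomial

/-- Two polynomials (thought of as hypersurface equations over `k`) are
birationally equivalent if the fraction fields of the corresponding quotient
rings are isomorphic as `k`-algebras. -/
def BirationallyEquivalent (k : Type*) [Field k] {ι ι' : Type*}
    (Ψ : MvPolynomial ι k) (Ψ' : MvPolynomial ι' k) : Prop :=
  Nonempty (FractionRing (MvPolynomial ι k ⧸ Ideal.span {Ψ}) ≃ₐ[k]
    FractionRing (MvPolynomial ι' k ⧸ Ideal.span {Ψ'}))

/-!
Multiplication by `u + v √aᵢ` on `k(√aᵢ) = k ⊕ k √aᵢ` scales the binary form `⟨1, -aᵢ⟩` by its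
norm `N = u² - aᵢ v²`. The Pfister form is the orthogonal sum of the binary forms
`d_ε x_ε² + d_{ε'} x_{ε'}² = d_ε (x_ε² - aᵢ x_{ε'}²)` over the pairs `{ε, ε'}` of sign vectors that
differ only at `i`, so performing this substitution on every pair gives a linear automorphism
`σ` with `φ ∘ σ = N φ`. Leaving `z` fixed, `σ` turns `φ - bN z²` into `N (φ - b z²)`, and a linear
automorphism carrying one equation to a unit multiple of the other induces an isomorphism of
the coordinate rings, hence of their fraction fields.
-/

theorem BirationallyEquivalent.symm {k ι ι' : Type*} [Field k] {Ψ : MvPolynomial ι k}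
    {Ψ' : MvPolynomial ι' k} (h : BirationallyEquivalent k Ψ Ψ') :
    BirationallyEquivalent k Ψ' Ψ :=
  h.map AlgEquiv.symm

theorem BirationallyEquivalent.of_algEquiv {k ι ι' : Type*} [Field k]
    (e : MvPolynomial ι k ≃ₐ[k] MvPolynomial ι' k) {Ψ : MvPolynomial ι k}
    {Ψ' : MvPolynomial ι' k} {c : k} (hc : c ≠ 0) (h : e Ψ = C c * Ψ') :
    BirationallyEquivalent k Ψ Ψ' := by
  have hspan : Ideal.span {Ψ'} = (Ideal.span {Ψ}).map e := by
    rw [Ideal.map_span, Set.image_singleton]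
    exact (congrArg (fun p => Ideal.span {p}) h).trans
      (Ideal.span_singleton_mul_left_unit (hc.isUnit.map C) Ψ') |>.symm
  exact ⟨IsFractionRing.algEquivOfAlgEquiv (Ideal.quotientEquivAlg _ _ e hspan)⟩

section involutionSubst

variable {R ι : Type*} [CommRing R] {f : ι → ι} {c w : ι → R}

noncomputable def involutionSubst (f : ι → ι) (c w : ι → R) :
    MvPolynomial ι R →ₐ[R] MvPolynomial ι R :=
  aeval fun x => C (c x) * X x + C (w x) * X (f x)

theorem involutionSubst_X (x : ι) :
    involutionSubst f c w (X x) = C (c x) * X x + C (w x) * X (f x) :=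
  aeval_X _ _

theorem involutionSubst_comp (hf : Function.Involutive f) (c' w' : ι → R) :
    (involutionSubst f c w).comp (involutionSubst f c' w') =
      involutionSubst f (fun x => c' x * c x + w' x * w (f x))
        (fun x => c' x * w x + w' x * c (f x)) := by
  refine algHom_ext fun x => ?_
  simp only [AlgHom.comp_apply, involutionSubst_X, map_add, map_mul, algHom_C,
    algebraMap_eq, hf x]
  ring

theorem involutionSubst_one_zero : involutionSubst f (fun _ => (1 : R)) 0 = AlgHom.id R _ :=
  algHom_ext fun x => by simp [involutionSubst_X]

theorem involutionSubst_sum_C_mul_X_sq [Fintype ι] (hf : Function.Involutive f) {d d' : ι → R}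
    (hdiag : ∀ x, d x * c x ^ 2 + d (f x) * w (f x) ^ 2 = d' x)
    (hcross : ∀ x, d x * c x * w x + d (f x) * c (f x) * w (f x) = 0) :
    involutionSubst f c w (∑ x, C (d x) * X x ^ 2) = ∑ x, C (d' x) * X x ^ 2 := by
  have hexpand : ∀ x, C (d x) * (C (c x) * X x + C (w x) * X (f x)) ^ 2 =
      C (d x * c x ^ 2) * X x ^ 2 + C (d x * w x ^ 2) * X (f x) ^ 2
        + C (2 * (d x * c x * w x)) * (X x * X (f x)) := by
    intro x
    simp only [C_mul, C_pow, map_ofNat]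
    ring
  have hreindex : ∑ x, C (d x * w x ^ 2) * X (f x) ^ 2 =
      ∑ x, C (d (f x) * w (f x) ^ 2) * X x ^ 2 :=
    Fintype.sum_bijective f hf.bijective _ _ fun x => by rw [hf x]
  -- the cross terms of `x` and `f x` cancel in pairs, with no division by `2`
  have hcross_sum : ∑ x, C (2 * (d x * c x * w x)) * (X x * X (f x)) = 0 := by
    refine Finset.sum_involution (fun x _ => f x) (fun x _ => ?_) (fun x _ hx hfx => hx ?_)
      (fun x _ => Finset.mem_univ _) (fun x _ => hf x)
    · rw [hf x, mul_comm (X (f x)), ← add_mul, ← C_add, ← mul_add, hcross, mul_zero, C_0,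
        zero_mul]
    · have := hcross x
      rw [hfx, ← two_mul] at this
      rw [this, C_0, zero_mul]
  calc involutionSubst f c w (∑ x, C (d x) * X x ^ 2)
      = ∑ x, C (d x) * (C (c x) * X x + C (w x) * X (f x)) ^ 2 := by
        simp only [map_sum, map_mul, map_pow, algHom_C, algebraMap_eq, involutionSubst_X]
    _ = ∑ x, C (d x * c x ^ 2) * X x ^ 2 + ∑ x, C (d x * w x ^ 2) * X (f x) ^ 2
          + ∑ x, C (2 * (d x * c x * w x)) * (X x * X (f x)) := by
        simp only [hexpand, Finset.sum_add_distrib]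
    _ = ∑ x, C (d' x) * X x ^ 2 := by
        simp only [hreindex, hcross_sum, add_zero, ← Finset.sum_add_distrib, ← add_mul, ← C_add,
          hdiag]

end involutionSubst

section involutionSubstEquiv

variable {k ι : Type*} [Field k] {f : ι → ι} {c w : ι → k}

/-- For an involution `f`, `involutionSubst f c w` acts on each pair `{x, f x}` by a `2 × 2`
matrix of determinant `c x * c (f x) - w x * w (f x)`; the inverse is the adjugate over it. -/
noncomputable def involutionSubstEquiv (hf : Function.Involutive f)
    (hdet : ∀ x, c x * c (f x) - w x * w (f x) ≠ 0) : MvPolynomial ι k ≃ₐ[k] MvPolynomial ι k :=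
  AlgEquiv.ofAlgHom (involutionSubst f c w)
    (involutionSubst f (fun x => c (f x) / (c x * c (f x) - w x * w (f x)))
      (fun x => -w x / (c x * c (f x) - w x * w (f x))))
    (by
      rw [involutionSubst_comp hf, ← involutionSubst_one_zero (f := f)]
      congr 1 <;> funext x
      · rw [div_mul_eq_mul_div, div_mul_eq_mul_div, ← add_div, div_eq_one_iff_eq (hdet x)]
        ring
      · rw [Pi.zero_apply]
        ring)
    (by
      rw [involutionSubst_comp hf, ← involutionSubst_one_zero (f := f)]
      congr 1 <;> funext x <;>
        rw [show c (f x) * c (f (f x)) - w (f x) * w (f (f x)) = c x * c (f x) - w x * w (f x) by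
          rw [hf x]; ring]
      · rw [mul_div_assoc', mul_div_assoc', ← add_div, div_eq_one_iff_eq (hdet x)]
        ring
      · simp only [hf x, Pi.zero_apply]
        ring)

end involutionSubstEquiv

section flipAt

variable {τ : Type*} [DecidableEq τ]

def flipAt (i : τ) (ε : τ → Bool) : τ → Bool :=
  Function.update ε i (!ε i)

@[simp]
theorem flipAt_apply_self (i : τ) (ε : τ → Bool) : flipAt i ε i = !ε i :=
  Function.update_self _ _ _

theorem flipAt_involutive (i : τ) : Function.Involutive (flipAt i) := fun ε => by
  simp only [flipAt, Function.update_self, Bool.not_not, Function.update_idem,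
    Function.update_eq_self]

end flipAt

section pfister

variable {k τ : Type*} [CommRing k] {a : τ → k} {i : τ} {u v : k} {ε : τ → Bool}

def pfisterCoeff [Fintype τ] (a : τ → k) (ε : τ → Bool) : k :=
  ∏ j, if ε j then -a j else 1

/-- The off-diagonal entries of the substitution on the pair `{ε, flipAt i ε}` that multiplies
`x_ε + √aᵢ x_{flipAt i ε}` (for `ε i = false`) by `u + v √aᵢ`. -/
def pairWeight (a : τ → k) (i : τ) (v : k) (ε : τ → Bool) : k :=
  if ε i then v else a i * v

theorem pairWeight_of_false (h : ε i = false) : pairWeight a i v ε = a i * v :=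
  if_neg (by simp [h])

theorem pairWeight_of_true (h : ε i = true) : pairWeight a i v ε = v :=
  if_pos h

variable [DecidableEq τ]

theorem pairWeight_flipAt_of_false (h : ε i = false) : pairWeight a i v (flipAt i ε) = v :=
  pairWeight_of_true (by simp [h])

theorem pairWeight_flipAt_of_true (h : ε i = true) :
    pairWeight a i v (flipAt i ε) = a i * v :=
  pairWeight_of_false (by simp [h])

theorem pairWeight_mul_pairWeight_flipAt (ε : τ → Bool) :
    pairWeight a i v ε * pairWeight a i v (flipAt i ε) = a i * v ^ 2 := by
  cases h : ε i
  · rw [pairWeight_of_false h, pairWeight_flipAt_of_false h]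
    ring
  · rw [pairWeight_of_true h, pairWeight_flipAt_of_true h]
    ring

variable [Fintype τ]

theorem pfisterCoeff_flipAt_of_false (h : ε i = false) :
    pfisterCoeff a (flipAt i ε) = -a i * pfisterCoeff a ε := by
  simp only [pfisterCoeff, Fintype.prod_eq_mul_prod_compl i, flipAt_apply_self, h,
    Bool.not_false, ite_true, Bool.false_eq_true, ite_false, one_mul]
  congr 1
  refine Finset.prod_congr rfl fun j hj => ?_
  rw [flipAt, Function.update_of_ne (Finset.mem_compl.1 hj ∘ Finset.mem_singleton.2)]

theorem pfisterCoeff_of_true (h : ε i = true) :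
    pfisterCoeff a ε = -a i * pfisterCoeff a (flipAt i ε) := by
  nth_rw 1 [← flipAt_involutive i ε]
  exact pfisterCoeff_flipAt_of_false (by simp [h])

theorem pfisterCoeff_mul_sq_add_flipAt (ε : τ → Bool) :
    pfisterCoeff a ε * u ^ 2 + pfisterCoeff a (flipAt i ε) * pairWeight a i v (flipAt i ε) ^ 2 =
      (u ^ 2 - a i * v ^ 2) * pfisterCoeff a ε := by
  cases h : ε i
  · rw [pfisterCoeff_flipAt_of_false h, pairWeight_flipAt_of_false h]
    ring
  · rw [pfisterCoeff_of_true h, pairWeight_flipAt_of_true h]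
    ring

theorem pfisterCoeff_cross_add_flipAt (ε : τ → Bool) :
    pfisterCoeff a ε * u * pairWeight a i v ε +
      pfisterCoeff a (flipAt i ε) * u * pairWeight a i v (flipAt i ε) = 0 := by
  cases h : ε i
  · rw [pfisterCoeff_flipAt_of_false h, pairWeight_of_false h, pairWeight_flipAt_of_false h]
    ring
  · rw [pfisterCoeff_of_true h, pairWeight_of_true h, pairWeight_flipAt_of_true h]
    ring

end pfister

theorem sum_C_mul_X_sq_sub_eq_sum_elim {R ι : Type*} [CommRing R] [Fintype ι] (d : ι → R)
    (e : R) :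
    ∑ x, C (d x) * X (Sum.inl x) ^ 2 - C e * X (Sum.inr ()) ^ 2 =
      ∑ x : ι ⊕ Unit, C (Sum.elim d (fun _ => -e) x) * X x ^ 2 := by
  simp only [Fintype.sum_sum_type, Sum.elim_inl, Sum.elim_inr, Finset.univ_unique,
    Finset.sum_singleton, PUnit.default_eq_unit, C_neg, neg_mul, sub_eq_add_neg]

section pfisterNormSubst

variable {k τ : Type*} [DecidableEq τ]

theorem sumMap_flipAt_involutive (i : τ) :
    Function.Involutive (Sum.map (flipAt i) (id : Unit → Unit)) := by
  rintro (ε | _)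
  · exact congrArg Sum.inl (flipAt_involutive i ε)
  · rfl

variable [CommRing k] [Fintype τ]

noncomputable def pfisterNormSubst (a : τ → k) (i : τ) (u v : k) :
    MvPolynomial ((τ → Bool) ⊕ Unit) k →ₐ[k] MvPolynomial ((τ → Bool) ⊕ Unit) k :=
  involutionSubst (Sum.map (flipAt i) id) (Sum.elim (fun _ => u) fun _ => 1)
    (Sum.elim (pairWeight a i v) fun _ => 0)

theorem pfisterNormSubst_sub_eq_C_mul (a : τ → k) (i : τ) (u v b : k) :
    pfisterNormSubst a i u v (∑ ε, C (pfisterCoeff a ε) * X (Sum.inl ε) ^ 2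
        - C (b * (u ^ 2 - a i * v ^ 2)) * X (Sum.inr ()) ^ 2) =
      C (u ^ 2 - a i * v ^ 2) * (∑ ε, C (pfisterCoeff a ε) * X (Sum.inl ε) ^ 2
        - C b * X (Sum.inr ()) ^ 2) := by
  rw [sum_C_mul_X_sq_sub_eq_sum_elim, sum_C_mul_X_sq_sub_eq_sum_elim, Finset.mul_sum]
  refine (involutionSubst_sum_C_mul_X_sq (sumMap_flipAt_involutive i)
    (d' := fun x => (u ^ 2 - a i * v ^ 2) * Sum.elim (pfisterCoeff a) (fun _ => -b) x)
    ?_ ?_).trans (by simp only [C_mul, mul_assoc])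
  · rintro (ε | _)
    · exact pfisterCoeff_mul_sq_add_flipAt ε
    · simp only [Sum.map_inr, Sum.elim_inr]
      ring
  · rintro (ε | _)
    · exact pfisterCoeff_cross_add_flipAt ε
    · simp only [Sum.map_inr, Sum.elim_inr]
      ring

end pfisterNormSubst

noncomputable def pfisterNormSubstEquiv {k τ : Type*} [Field k] [Fintype τ] [DecidableEq τ]
    {a : τ → k} {i : τ} {u v : k} (hN : u ^ 2 - a i * v ^ 2 ≠ 0) :
    MvPolynomial ((τ → Bool) ⊕ Unit) k ≃ₐ[k] MvPolynomial ((τ → Bool) ⊕ Unit) k :=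
  involutionSubstEquiv (sumMap_flipAt_involutive i) (c := Sum.elim (fun _ => u) fun _ => 1)
    (w := Sum.elim (pairWeight a i v) fun _ => 0) (by
      rintro (ε | _)
      · simpa only [Sum.map_inl, Sum.elim_inl, pairWeight_mul_pairWeight_flipAt, ← sq] using hN
      · simp)

theorem pfister_norm_scaling_birational_general
    (k : Type*) [Field k] (n : ℕ)
    (a : Fin n → k)
    (d : (Fin n → Bool) → k) (hd : ∀ ε, d ε = ∏ i : Fin n, if ε i then -a i else 1)
    (b : k)
    (i : Fin n) (u v : k) (N : k) (hN : N = u ^ 2 - a i * v ^ 2) (hN0 : N ≠ 0)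
    (Ψ₁ Ψ₂ : MvPolynomial ((Fin n → Bool) ⊕ Unit) k)
    (hΨ₁ : Ψ₁ = (∑ ε : Fin n → Bool, MvPolynomial.C (d ε) * X (Sum.inl ε) ^ 2)
        - MvPolynomial.C b * X (Sum.inr ()) ^ 2)
    (hΨ₂ : Ψ₂ = (∑ ε : Fin n → Bool, MvPolynomial.C (d ε) * X (Sum.inl ε) ^ 2)
        - MvPolynomial.C (b * N) * X (Sum.inr ()) ^ 2) :
    BirationallyEquivalent k Ψ₁ Ψ₂ := by
  obtain rfl : d = pfisterCoeff a := funext hd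
  subst hN hΨ₁ hΨ₂
  exact (BirationallyEquivalent.of_algEquiv (pfisterNormSubstEquiv hN0) hN0
    (pfisterNormSubst_sub_eq_C_mul a i u v b)).symm

/-- Let `k` be a field of characteristic 0, `n ≥ 1`,
`a₁,…,aₙ ∈ kˣ`, and let `φ = ⟪a₁,…,aₙ⟫` be the `n`-fold Pfister form on
`k^(2ⁿ)`; assume `φ` is anisotropic.  Let `b ∈ kˣ`, fix an index `i`, and let
`u, v ∈ k` with `N = u² − aᵢ·v² ≠ 0` (a norm from `k(√aᵢ)/k`).  Then the forms
`φ ⊥ ⟨−b⟩ : (x,z) ↦ φ(x) − b·z²` and `φ ⊥ ⟨−b·N⟩ : (x,z) ↦ φ(x) − b·N·z²`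
are birationally equivalent. -/
theorem pfister_norm_scaling_birational
    (k : Type*) [Field k] [CharZero k] (n : ℕ) (hn : 1 ≤ n)
    (a : Fin n → k) (ha : ∀ i, a i ≠ 0)
    (d : (Fin n → Bool) → k) (hd : ∀ ε, d ε = ∏ i : Fin n, if ε i then -a i else 1)
    (haniso : ∀ x : (Fin n → Bool) → k, ∑ ε : Fin n → Bool, d ε * x ε ^ 2 = 0 → x = 0)
    (b : k) (hb : b ≠ 0)
    (i : Fin n) (u v : k) (N : k) (hN : N = u ^ 2 - a i * v ^ 2) (hN0 : N ≠ 0)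
    (Ψ₁ Ψ₂ : MvPolynomial ((Fin n → Bool) ⊕ Unit) k)
    (hΨ₁ : Ψ₁ = (∑ ε : Fin n → Bool, MvPolynomial.C (d ε) * X (Sum.inl ε) ^ 2)
        - MvPolynomial.C b * X (Sum.inr ()) ^ 2)
    (hΨ₂ : Ψ₂ = (∑ ε : Fin n → Bool, MvPolynomial.C (d ε) * X (Sum.inl ε) ^ 2)
        - MvPolynomial.C (b * N) * X (Sum.inr ()) ^ 2) :
    BirationallyEquivalent k Ψ₁ Ψ₂ :=
  pfister_norm_scaling_birational_general k n a d hd b i u v N hN hN0 Ψ₁ Ψ₂ hΨ₁ hΨ₂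
end
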